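/- arXiv:2101.01056 — 2 statements merged into one kernel-verified Lean document; each statement's English description precedes it below -/
import Mathlib

section
/- Lifting result for arc addition: suppose under design z¹ the optimal route for trip r is a hub-route via hubs m, n where m is a closest active hub to the origin and n is a closest active hub to the destination. Then for any design z² that (i) opens all legs open in z¹ and (ii) keeps inactive all non-active hubs of z¹ that are strictly closer to the origin than m or strictly closer to the destination than n, the optimal trip time satisfies t² ≤ t¹. -/
/-- Lifting result for arc addition: if the optimal route under `z1` uses the
closest active hubs to origin and destination, and the larger design `z2`
opens all legs of `z1` while keeping inactive every non-active hub of `z1`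
that is strictly closer to the origin or the destination, then the optimal
trip time cannot increase. -/
theorem arc_addition_lifting {H : Type*} [Fintype H]
    (θ g : ℝ) (hθ0 : 0 < θ) (hθ1 : θ < 1) (hg : 0 < g)
    (dOr dDe : H → ℝ) (z1 z2 : H → H → Bool)
    (m n h2 l2 : H) (t1 t2 : ℝ)
    (hle : ∀ h l, z1 h l = true → z2 h l = true)
    -- m and n are active in z1 and closest among active hubs of z1
    (hm_act : ∃ l, z1 m l = true)
    (hn_act : ∃ l, z1 n l = true)
    (hm_min : ∀ h : H, (∃ l, z1 h l = true) → dOr m ≤ dOr h)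
    (hn_min : ∀ h : H, (∃ l, z1 h l = true) → dDe n ≤ dDe h)
    -- non-active hubs of z1 strictly closer to origin/destination stay inactive in z2
    (hW_or : ∀ h : H, ¬ (∃ l, z1 h l = true) → dOr h < dOr m →
      ¬ (∃ l, z2 h l = true))
    (hW_de : ∀ h : H, ¬ (∃ l, z1 h l = true) → dDe h < dDe n →
      ¬ (∃ l, z2 h l = true))
    -- the optimal route under z2 is a hub-route via active hubs h2, l2
    (hh2_act : ∃ l, z2 h2 l = true)
    (hl2_act : ∃ l, z2 l2 l = true)
    -- monotonicity of the optimal follower objective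
    (hmono : θ * t2 + (1 - θ) * g * (dOr h2 + dDe l2) ≤
             θ * t1 + (1 - θ) * g * (dOr m + dDe n)) :
    t2 ≤ t1 := by
  have hOr : dOr m ≤ dOr h2 := by
    by_cases hact : ∃ l, z1 h2 l = true
    · exact hm_min _ hact
    · by_contra hlt
      exact hW_or _ hact (lt_of_not_ge hlt) hh2_act
  have hDe : dDe n ≤ dDe l2 := by
    by_cases hact : ∃ l, z1 l2 l = true
    · exact hn_min _ hact
    · by_contra hlt
      exact hW_de _ hact (lt_of_not_ge hlt) hl2_act
  have hcoef : 0 ≤ (1 - θ) * g := by nlinarith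
  have : (1 - θ) * g * (dOr m + dDe n) ≤ (1 - θ) * g * (dOr h2 + dDe l2) :=
    mul_le_mul_of_nonneg_left (by linarith) hcoef
  have ht : θ * t2 ≤ θ * t1 := by linarith
  exact le_of_mul_le_mul_left ht hθ0
end

section
/- Validity of the strengthened non-adoption cut: if for design z¹ trip r is guaranteed not to be adopted under any z ≤ z¹, then every consistent pair (z, δ^r) satisfies Σ_{(h,l): z¹_{hl}=0} z_{hl} ≥ δ^r. -/
/-!
The cut's left side counts the arcs opened by `z` outside `z1`. If the trip is adopted
(`δ = 1`), the guarantee forces `z ≰ z1`, so at least one arc is counted; otherwise `δ = 0`.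
-/

open Finset

theorem sum_ite_ite_eq_card_filter {ι : Type*} [Fintype ι] (x y : ι → Bool) :
    ∑ p, (if y p then 0 else if x p then (1 : ℤ) else 0) = #{p | x p ∧ y p = false} := by
  rw [card_filter, Nat.cast_sum]
  refine sum_congr rfl fun p _ => ?_
  cases x p <;> cases y p <;> rfl

theorem card_filter_pos_of_not_imp {ι : Type*} [Fintype ι] {x y : ι → Bool}
    (h : ¬ ∀ p, x p = true → y p = true) : 0 < #{p | x p ∧ y p = false} := by
  push Not at h
  obtain ⟨p, hx, hy⟩ := h
  exact card_pos.mpr ⟨p, by simp [hx, hy]⟩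

/-- Validity of the strengthened non-adoption cut: if non-adoption is
guaranteed under every design `z ≤ z1`, then every consistent pair `(z, δ)`
satisfies `Σ_{(h,l): z1_{hl}=0} z_{hl} ≥ δ`. -/
theorem strengthened_non_adoption_cut_valid {H : Type*} [Fintype H]
    (adopt : (H → H → Bool) → Bool) (z1 : H → H → Bool)
    (hguar : ∀ z : H → H → Bool,
      (∀ h l, z h l = true → z1 h l = true) → adopt z = false) :
    ∀ (z : H → H → Bool) (δ : ℤ),
      δ = (if adopt z then 1 else 0) →
      δ ≤ ∑ p : H × H,
        (if z1 p.1 p.2 then 0 else (if z p.1 p.2 then (1 : ℤ) else 0)) := by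
  intro z δ hδ
  rw [sum_ite_ite_eq_card_filter (fun p : H × H => z p.1 p.2) (fun p => z1 p.1 p.2)]
  cases hadopt : adopt z
  · simp [hδ, hadopt]
  · have hviolated : ¬ ∀ p : H × H, z p.1 p.2 = true → z1 p.1 p.2 = true := fun hle => by
      simp [hguar z fun h l => hle (h, l)] at hadopt
    have hpos := card_filter_pos_of_not_imp hviolated
    simp only [hδ, hadopt, if_true]
    omega
end
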